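/- Let F be an algebraically closed field of characteristic different from 2. The group SO(3,F) acts on the set of one-dimensional subspaces of F³, and this set decomposes into exactly two orbits: the set of lines Fv with (v,v) ≠ 0, and the set of lines Fv with v ≠ 0 and (v,v) = 0. That is, SO(3,F) acts transitively on each of these two sets, and every one-dimensional subspace lies in exactly one of them. -/

import Mathlib

open Matrix

/-- The standard symmetric bilinear form on `R³`: `(v,w) = ∑ i, v i * w i`. -/
def bil {R : Type*} [CommRing R] (v w : Fin 3 → R) : R := ∑ j, v j * w j

/-- The `j`-th column of a 3×3 matrix. -/
def vcol {R : Type*} (g : Matrix (Fin 3) (Fin 3) R) (j : Fin 3) : Fin 3 → R :=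
  fun i => g i j

/-- Membership in `SO(3,R)`: `kᵀk = 1` and `det k = 1`. -/
def SO3 {R : Type*} [CommRing R] (g : Matrix (Fin 3) (Fin 3) R) : Prop :=
  gᵀ * g = 1 ∧ g.det = 1

/-- A 3×3 matrix is upper triangular. -/
def UpperTri {R : Type*} [CommRing R] (b : Matrix (Fin 3) (Fin 3) R) : Prop :=
  ∀ i j : Fin 3, j < i → b i j = 0

/-- `c₁(g) = (v₁(g), v₁(g))`. -/
def c1 {R : Type*} [CommRing R] (g : Matrix (Fin 3) (Fin 3) R) : R :=
  bil (vcol g 0) (vcol g 0)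

/-- `c₂(g) = (v₁(g),v₁(g))(v₂(g),v₂(g)) − (v₁(g),v₂(g))²`. -/
def c2 {R : Type*} [CommRing R] (g : Matrix (Fin 3) (Fin 3) R) : R :=
  bil (vcol g 0) (vcol g 0) * bil (vcol g 1) (vcol g 1) - (bil (vcol g 0) (vcol g 1)) ^ 2

/-- `c₃(g) = (v₁(g), v₂(g))`. -/
def c3 {R : Type*} [CommRing R] (g : Matrix (Fin 3) (Fin 3) R) : R :=
  bil (vcol g 0) (vcol g 1)

/-!
Statement 19: Over an algebraically closed field `F` of characteristic ≠ 2, the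
action of `SO(3,F)` on one-dimensional subspaces of `F³` has exactly two orbits:
the lines `Fv` with `(v,v) ≠ 0` and the lines `Fv` with `(v,v) = 0` (`v ≠ 0`).
This is expressed by: (i) whether `(v,v) = 0` only depends on the line spanned by a
nonzero vector `v`; (ii) two lines `Fv`, `Fw` lie in the same `SO(3,F)`-orbit iff
they lie in the same class, i.e. `(v,v) = 0 ↔ (w,w) = 0`.
-/

section Aux
variable {F : Type*} [Field F]

lemma bil_expand (v w : Fin 3 → F) : bil v w = v 0 * w 0 + v 1 * w 1 + v 2 * w 2 := by
  simp [bil, Fin.sum_univ_three]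

def cp (u v : Fin 3 → F) : Fin 3 → F :=
  ![u 1 * v 2 - u 2 * v 1, u 2 * v 0 - u 0 * v 2, u 0 * v 1 - u 1 * v 0]

def mk3 (u1 u2 : Fin 3 → F) : Matrix (Fin 3) (Fin 3) F :=
  Matrix.of fun i j => ![u1, u2, cp u1 u2] j i

lemma mk3_SO3 (u1 u2 : Fin 3 → F) (h1 : bil u1 u1 = 1) (h2 : bil u2 u2 = 1)
    (h12 : bil u1 u2 = 0) : SO3 (mk3 u1 u2) := by
  rw [bil_expand] at h1 h2 h12
  have E : ∀ i j : Fin 3, ((mk3 u1 u2)ᵀ * (mk3 u1 u2)) i j = (1 : Matrix (Fin 3) (Fin 3) F) i j := by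
    have E00 : ((mk3 u1 u2)ᵀ * (mk3 u1 u2)) 0 0 = (1 : Matrix (Fin 3) (Fin 3) F) 0 0 := by
      simp [mk3, cp, Matrix.mul_apply, Fin.sum_univ_three, Matrix.one_apply]
      try linear_combination h1
    have E01 : ((mk3 u1 u2)ᵀ * (mk3 u1 u2)) 0 1 = (1 : Matrix (Fin 3) (Fin 3) F) 0 1 := by
      simp [mk3, cp, Matrix.mul_apply, Fin.sum_univ_three, Matrix.one_apply]
      try linear_combination h12
    have E02 : ((mk3 u1 u2)ᵀ * (mk3 u1 u2)) 0 2 = (1 : Matrix (Fin 3) (Fin 3) F) 0 2 := by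
      simp [mk3, cp, Matrix.mul_apply, Fin.sum_univ_three, Matrix.one_apply]
      try ring
    have E10 : ((mk3 u1 u2)ᵀ * (mk3 u1 u2)) 1 0 = (1 : Matrix (Fin 3) (Fin 3) F) 1 0 := by
      simp [mk3, cp, Matrix.mul_apply, Fin.sum_univ_three, Matrix.one_apply]
      try linear_combination h12
    have E11 : ((mk3 u1 u2)ᵀ * (mk3 u1 u2)) 1 1 = (1 : Matrix (Fin 3) (Fin 3) F) 1 1 := by
      simp [mk3, cp, Matrix.mul_apply, Fin.sum_univ_three, Matrix.one_apply]
      try linear_combination h2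
    have E12 : ((mk3 u1 u2)ᵀ * (mk3 u1 u2)) 1 2 = (1 : Matrix (Fin 3) (Fin 3) F) 1 2 := by
      simp [mk3, cp, Matrix.mul_apply, Fin.sum_univ_three, Matrix.one_apply]
      try ring
    have E20 : ((mk3 u1 u2)ᵀ * (mk3 u1 u2)) 2 0 = (1 : Matrix (Fin 3) (Fin 3) F) 2 0 := by
      simp [mk3, cp, Matrix.mul_apply, Fin.sum_univ_three, Matrix.one_apply]
      try ring
    have E21 : ((mk3 u1 u2)ᵀ * (mk3 u1 u2)) 2 1 = (1 : Matrix (Fin 3) (Fin 3) F) 2 1 := by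
      simp [mk3, cp, Matrix.mul_apply, Fin.sum_univ_three, Matrix.one_apply]
      try ring
    have E22 : ((mk3 u1 u2)ᵀ * (mk3 u1 u2)) 2 2 = (1 : Matrix (Fin 3) (Fin 3) F) 2 2 := by
      simp [mk3, cp, Matrix.mul_apply, Fin.sum_univ_three, Matrix.one_apply]
      try linear_combination (u2 0 ^ 2 + u2 1 ^ 2 + u2 2 ^ 2) * h1 + h2 - (u1 0 * u2 0 + u1 1 * u2 1 + u1 2 * u2 2) * h12
    intro i j
    fin_cases i <;> fin_cases j
    exacts [E00, E01, E02, E10, E11, E12, E20, E21, E22]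
  refine ⟨?_, ?_⟩
  · ext i j; exact E i j
  · rw [Matrix.det_fin_three]
    simp [mk3, cp]
    try linear_combination (u2 0 ^ 2 + u2 1 ^ 2 + u2 2 ^ 2) * h1 + h2 - (u1 0 * u2 0 + u1 1 * u2 1 + u1 2 * u2 2) * h12

lemma mk3_mulVec (u1 u2 : Fin 3 → F) (a b : F) :
    (mk3 u1 u2).mulVec ![a, b, 0] = a • u1 + b • u2 := by
  funext i
  have E : ∀ i : Fin 3, (mk3 u1 u2).mulVec ![a, b, 0] i = (a • u1 + b • u2) i := by
    have E0 : (mk3 u1 u2).mulVec ![a, b, 0] 0 = (a • u1 + b • u2) 0 := by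
      simp [mk3, cp, Matrix.mulVec, dotProduct, Fin.sum_univ_three]; try ring
    have E1 : (mk3 u1 u2).mulVec ![a, b, 0] 1 = (a • u1 + b • u2) 1 := by
      simp [mk3, cp, Matrix.mulVec, dotProduct, Fin.sum_univ_three]; try ring
    have E2 : (mk3 u1 u2).mulVec ![a, b, 0] 2 = (a • u1 + b • u2) 2 := by
      simp [mk3, cp, Matrix.mulVec, dotProduct, Fin.sum_univ_three]; try ring
    intro i; fin_cases i
    exacts [E0, E1, E2]
  exact E i

lemma bil_mulVec (k : Matrix (Fin 3) (Fin 3) F) (hk : kᵀ * k = 1) (v w : Fin 3 → F) :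
    bil (k.mulVec v) (k.mulVec w) = bil v w := by
  have key : ∀ i j, (kᵀ * k) i j = (1 : Matrix (Fin 3) (Fin 3) F) i j := fun i j => by rw [hk]
  have e00 := key 0 0; have e01 := key 0 1; have e02 := key 0 2
  have e10 := key 1 0; have e11 := key 1 1; have e12 := key 1 2
  have e20 := key 2 0; have e21 := key 2 1; have e22 := key 2 2
  simp [Matrix.mul_apply, Fin.sum_univ_three, Matrix.one_apply, Matrix.transpose_apply] at e00 e01 e02 e10 e11 e12 e20 e21 e22
  rw [bil_expand, bil_expand]
  simp only [Matrix.mulVec, dotProduct, Fin.sum_univ_three]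
  linear_combination v 0 * w 0 * e00 + v 0 * w 1 * e01 + v 0 * w 2 * e02 +
    v 1 * w 0 * e10 + v 1 * w 1 * e11 + v 1 * w 2 * e12 +
    v 2 * w 0 * e20 + v 2 * w 1 * e21 + v 2 * w 2 * e22

end Aux

section Main
variable {F : Type*} [Field F]

lemma bil_smul_smul (a b : F) (x y : Fin 3 → F) : bil (a • x) (b • y) = a * b * bil x y := by
  simp only [bil_expand, Pi.smul_apply, smul_eq_mul]; ring

lemma bil_smul_right (a : F) (x y : Fin 3 → F) : bil x (a • y) = a * bil x y := by
  simp only [bil_expand, Pi.smul_apply, smul_eq_mul]; ring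

lemma exists_sqrt [IsAlgClosed F] (a : F) : ∃ r : F, r ^ 2 = a :=
  IsAlgClosed.exists_pow_nat_eq a two_pos

lemma exists_smul_of_span_eq {v w : Fin 3 → F} (hw : w ≠ 0)
    (h : Submodule.span F {v} = Submodule.span F {w}) : ∃ c : F, c ≠ 0 ∧ w = c • v := by
  have hv : w ∈ Submodule.span F {v} := h ▸ Submodule.mem_span_singleton_self w
  obtain ⟨c, hc⟩ := Submodule.mem_span_singleton.1 hv
  refine ⟨c, ?_, hc.symm⟩
  rintro rfl
  rw [zero_smul] at hc
  exact hw hc.symm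

lemma transfer (k1 k2 : Matrix (Fin 3) (Fin 3) F) (hk1 : SO3 k1) (hk2 : SO3 k2)
    (e v w : Fin 3 → F) (c1 c2 : F) (hc1 : c1 ≠ 0) (hc2 : c2 ≠ 0)
    (h1 : k1.mulVec e = c1 • v) (h2 : k2.mulVec e = c2 • w) :
    ∃ k, SO3 k ∧ Submodule.span F {k.mulVec v} = Submodule.span F {w} := by
  have hk1' : k1 * k1ᵀ = 1 := mul_eq_one_comm.mp hk1.1
  refine ⟨k2 * k1ᵀ, ⟨?_, ?_⟩, ?_⟩
  · rw [Matrix.transpose_mul, Matrix.transpose_transpose, Matrix.mul_assoc,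
      ← Matrix.mul_assoc k2ᵀ, hk2.1, Matrix.one_mul]
    exact hk1'
  · rw [Matrix.det_mul, Matrix.det_transpose, hk1.2, hk2.2, one_mul]
  · have hv' : v = c1⁻¹ • (k1.mulVec e) := by
      rw [h1, smul_smul, inv_mul_cancel₀ hc1, one_smul]
    have hkv : (k2 * k1ᵀ).mulVec v = (c1⁻¹ * c2) • w := by
      rw [hv', Matrix.mulVec_smul, Matrix.mulVec_mulVec, Matrix.mul_assoc, hk1.1,
        Matrix.mul_one, h2, smul_smul]
    rw [hkv]
    exact Submodule.span_singleton_smul_eq (IsUnit.mk0 _ (mul_ne_zero (inv_ne_zero hc1) hc2)) w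

lemma aniso_trans [IsAlgClosed F] (hchar : (2 : F) ≠ 0) (v : Fin 3 → F) (ha : bil v v ≠ 0) :
    ∃ (k : Matrix (Fin 3) (Fin 3) F) (c : F), SO3 k ∧ c ≠ 0 ∧ k.mulVec ![1, 0, 0] = c • v := by
  obtain ⟨w, hw, hvw⟩ : ∃ w : Fin 3 → F, bil w w ≠ 0 ∧ bil v w = 0 := by
    by_cases h1 : bil ![-(v 1), v 0, 0] ![-(v 1), v 0, 0] ≠ 0
    · refine ⟨_, h1, ?_⟩
      rw [bil_expand]; simp; ring
    by_cases h2 : bil ![-(v 2), 0, v 0] ![-(v 2), 0, v 0] ≠ 0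
    · refine ⟨_, h2, ?_⟩
      rw [bil_expand]; simp; ring
    by_cases h3 : bil ![0, -(v 2), v 1] ![0, -(v 2), v 1] ≠ 0
    · refine ⟨_, h3, ?_⟩
      rw [bil_expand]; simp; ring
    push_neg at h1 h2 h3
    exfalso
    apply ha
    rw [bil_expand] at h1 h2 h3 ⊢
    simp only [Matrix.cons_val_zero, Matrix.cons_val_one, Matrix.head_cons,
      Matrix.cons_val_two, Matrix.tail_cons] at h1 h2 h3
    have h2v : 2 * (v 0 * v 0 + v 1 * v 1 + v 2 * v 2) = 0 := by linear_combination h1 + h2 + h3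
    exact (mul_eq_zero.1 h2v).resolve_left hchar
  obtain ⟨r, hr⟩ := exists_sqrt (F := F) (bil v v)
  obtain ⟨q, hq⟩ := exists_sqrt (F := F) (bil w w)
  have hr0 : r ≠ 0 := by rintro rfl; apply ha; rw [← hr]; ring
  have hq0 : q ≠ 0 := by rintro rfl; apply hw; rw [← hq]; ring
  have h1 : bil (r⁻¹ • v) (r⁻¹ • v) = 1 := by
    rw [bil_smul_smul, ← hr]; field_simp
  have h2 : bil (q⁻¹ • w) (q⁻¹ • w) = 1 := by
    rw [bil_smul_smul, ← hq]; field_simp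
  have h12 : bil (r⁻¹ • v) (q⁻¹ • w) = 0 := by
    rw [bil_smul_smul, hvw]; ring
  refine ⟨mk3 (r⁻¹ • v) (q⁻¹ • w), r⁻¹, mk3_SO3 _ _ h1 h2 h12, inv_ne_zero hr0, ?_⟩
  rw [mk3_mulVec]
  simp

lemma iso_trans [IsAlgClosed F] (hchar : (2 : F) ≠ 0) (i t : F) (hi : i ^ 2 = -1)
    (ht : t ^ 2 = -(4 : F)⁻¹) (v : Fin 3 → F) (hv : v ≠ 0) (h0 : bil v v = 0) :
    ∃ (k : Matrix (Fin 3) (Fin 3) F) (c : F), SO3 k ∧ c ≠ 0 ∧ k.mulVec ![1, i, 0] = c • v := by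
  have h4 : (4 : F) ≠ 0 := by
    intro h
    apply hchar
    have h22 : (2 : F) * 2 = 4 := by norm_num
    rw [h] at h22
    exact (mul_self_eq_zero.1 h22)
  have hq : (4 : F) * (4 : F)⁻¹ = 1 := mul_inv_cancel₀ h4
  have hi0 : i ≠ 0 := by
    rintro rfl
    rw [show ((0:F)^2 : F) = 0 by ring] at hi
    exact one_ne_zero (α := F) (neg_eq_zero.mp hi.symm)
  have ht0 : t ≠ 0 := by
    rintro rfl
    rw [show ((0:F)^2 : F) = 0 by ring] at ht
    exact inv_ne_zero h4 (neg_eq_zero.mp ht.symm)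
  obtain ⟨j, hj⟩ : ∃ j, v j ≠ 0 := by
    by_contra h
    push_neg at h
    exact hv (funext h)
  have hsingle : bil v (Pi.single j 1) = v j := by
    rw [bil_expand]; fin_cases j <;> simp
  set w : Fin 3 → F := (v j)⁻¹ • (Pi.single j 1 : Fin 3 → F) with hwdef
  have hvw : bil v w = 1 := by
    rw [hwdef, bil_smul_right, hsingle, inv_mul_cancel₀ hj]
  set w2 : Fin 3 → F := (2 : F) • w - bil w w • v with hw2def
  have h0e := h0
  have hvwe := hvw
  rw [bil_expand] at h0e hvwe
  have hvw2 : bil v w2 = 2 := by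
    simp only [bil_expand, hw2def, Pi.sub_apply, Pi.smul_apply, smul_eq_mul]
    linear_combination 2 * hvwe - (w 0 * w 0 + w 1 * w 1 + w 2 * w 2) * h0e
  have hw2w2 : bil w2 w2 = 0 := by
    simp only [bil_expand, hw2def, Pi.sub_apply, Pi.smul_apply, smul_eq_mul]
    linear_combination (-(4 * (w 0 * w 0 + w 1 * w 1 + w 2 * w 2))) * hvwe
      + (w 0 * w 0 + w 1 * w 1 + w 2 * w 2) ^ 2 * h0e
  have hvw2e := hvw2
  have hw2w2e := hw2w2
  rw [bil_expand] at hvw2e hw2w2e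
  have hu1 : bil ((i * t) • (v + w2)) ((i * t) • (v + w2)) = 1 := by
    simp only [bil_expand, Pi.add_apply, Pi.smul_apply, smul_eq_mul]
    linear_combination (i ^ 2 * t ^ 2) * h0e + (2 * i ^ 2 * t ^ 2) * hvw2e
      + (i ^ 2 * t ^ 2) * hw2w2e + (4 * t ^ 2) * hi - 4 * ht + hq
  have hu2 : bil (t • (v - w2)) (t • (v - w2)) = 1 := by
    simp only [bil_expand, Pi.sub_apply, Pi.smul_apply, smul_eq_mul]
    linear_combination t ^ 2 * h0e - (2 * t ^ 2) * hvw2e + t ^ 2 * hw2w2e - 4 * ht + hq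
  have hu12 : bil ((i * t) • (v + w2)) (t • (v - w2)) = 0 := by
    simp only [bil_expand, Pi.add_apply, Pi.sub_apply, Pi.smul_apply, smul_eq_mul]
    linear_combination (i * t ^ 2) * h0e - (i * t ^ 2) * hw2w2e
  refine ⟨mk3 ((i * t) • (v + w2)) (t • (v - w2)), 2 * i * t,
    mk3_SO3 _ _ hu1 hu2 hu12, mul_ne_zero (mul_ne_zero hchar hi0) ht0, ?_⟩
  rw [mk3_mulVec]
  funext m
  simp only [Pi.add_apply, Pi.sub_apply, Pi.smul_apply, smul_eq_mul]
  ring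

end Main

theorem SO3_orbits_on_lines {F : Type*} [Field F] [IsAlgClosed F]
    (hchar : (2 : F) ≠ 0) :
    (∀ v w : Fin 3 → F, v ≠ 0 → w ≠ 0 →
        Submodule.span F {v} = Submodule.span F {w} → (bil v v = 0 ↔ bil w w = 0)) ∧
    (∀ v w : Fin 3 → F, v ≠ 0 → w ≠ 0 →
        ((∃ k : Matrix (Fin 3) (Fin 3) F, SO3 k ∧
            Submodule.span F {k.mulVec v} = Submodule.span F {w})
          ↔ (bil v v = 0 ↔ bil w w = 0))) := by
  have part1 : ∀ v w : Fin 3 → F, v ≠ 0 → w ≠ 0 →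
      Submodule.span F {v} = Submodule.span F {w} → (bil v v = 0 ↔ bil w w = 0) := by
    intro v w hv hw hspan
    obtain ⟨c, hc, rfl⟩ := exists_smul_of_span_eq hw hspan
    rw [bil_smul_smul]
    simp [mul_eq_zero, hc]
  refine ⟨part1, ?_⟩
  intro v w hv hw
  constructor
  · rintro ⟨k, hk, hspan⟩
    have hkv : k.mulVec v ≠ 0 := by
      intro h
      apply hv
      have h2 := congrArg (fun x => kᵀ.mulVec x) h
      simpa [Matrix.mulVec_mulVec, hk.1, Matrix.one_mulVec, Matrix.mulVec_zero] using h2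
    have h3 := part1 _ _ hkv hw hspan
    rwa [bil_mulVec k hk.1] at h3
  · intro hiff
    by_cases h0 : bil v v = 0
    · obtain ⟨i, hi⟩ := exists_sqrt (F := F) (-1)
      obtain ⟨t, ht⟩ := exists_sqrt (F := F) (-(4 : F)⁻¹)
      obtain ⟨k1, c1, hk1, hc1, he1⟩ := iso_trans hchar i t hi ht v hv h0
      obtain ⟨k2, c2, hk2, hc2, he2⟩ := iso_trans hchar i t hi ht w hw (hiff.mp h0)
      exact transfer k1 k2 hk1 hk2 _ v w c1 c2 hc1 hc2 he1 he2
    · have h0w : bil w w ≠ 0 := fun h => h0 (hiff.mpr h)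
      obtain ⟨k1, c1, hk1, hc1, he1⟩ := aniso_trans hchar v h0
      obtain ⟨k2, c2, hk2, hc2, he2⟩ := aniso_trans hchar w h0w
      exact transfer k1 k2 hk1 hk2 _ v w c1 c2 hc1 hc2 he1 he2
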